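/- arXiv:1612.09481 — 10 statements merged into one kernel-verified Lean document; each statement's English description precedes it below -/
import Mathlib

section
/- If S is a doubly fractal sequence (i.e., S(1)=1 and both its upper-trimmed and lower-trimmed subsequences equal S) and S(2) ≠ 1, then S(2) = 2. -/
/-- `upperTrim S` removes from `S` every first occurrence of every value. -/
noncomputable def upperTrim (S : ℕ → ℕ) : ℕ → ℕ :=
  fun k => S (Nat.nth (fun i => ¬ ∀ j < i, S j ≠ S i) k)

/-- `lowerTrim S` subtracts 1 from each term and deletes the resulting zeros. -/
noncomputable def lowerTrim (S : ℕ → ℕ) : ℕ → ℕ :=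
  fun k => S (Nat.nth (fun i => 2 ≤ S i) k) - 1

/-- A sequence of positive integers, in which every positive integer occurs,
is doubly fractal if its first term is 1 and both trimmings return `S`. -/
def DoublyFractal (S : ℕ → ℕ) : Prop :=
  (∀ i, 0 < S i) ∧ (∀ m, 0 < m → ∃ i, S i = m) ∧
  S 0 = 1 ∧ upperTrim S = S ∧ lowerTrim S = S

/-- `S` is the signature sequence of `θ`: there is an enumeration `p` of all pairs of
positive integers, sorted increasingly by the value `i + j*θ`, with `S k = (p k).1`. -/
def IsSignature (θ : ℝ) (S : ℕ → ℕ) : Prop :=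
  ∃ p : ℕ → ℕ × ℕ,
    (∀ k, 0 < (p k).1 ∧ 0 < (p k).2) ∧
    (∀ i j, 0 < i → 0 < j → ∃ k, p k = (i, j)) ∧
    StrictMono (fun k => ((p k).1 : ℝ) + (p k).2 * θ) ∧
    ∀ k, S k = (p k).1

theorem Nat.nth_zero_eq_one {p : ℕ → Prop} (h0 : ¬ p 0) (h1 : p 1) :
    Nat.nth p 0 = 1 := by
  classical
  have hcount : Nat.count p 1 = 0 := by simp [Nat.count_succ, h0]
  simpa [hcount] using Nat.nth_count h1

theorem lowerTrim_zero_of_lt_two_of_two_le {S : ℕ → ℕ} (h0 : S 0 < 2) (h1 : 2 ≤ S 1) :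
    lowerTrim S 0 = S 1 - 1 := by
  rw [lowerTrim, Nat.nth_zero_eq_one (p := fun i => 2 ≤ S i) (by omega) h1]

/-- If S is doubly fractal and S(2) ≠ 1 then S(2) = 2 (indices shifted to start at 0). -/
theorem stmt0 (S : ℕ → ℕ) (hS : DoublyFractal S) (h2 : S 1 ≠ 1) : S 1 = 2 := by
  obtain ⟨hpos, -, h0, -, hlow⟩ := hS
  have h1 : 2 ≤ S 1 := by have := hpos 1; omega
  have := congrFun hlow 0
  rw [lowerTrim_zero_of_lt_two_of_two_le (by omega) h1, h0] at this
  omega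
end

section
/- If S is a doubly fractal sequence with S(2) ≠ 1, and n is the greatest integer k such that S(j) = j for all j ≤ k, then S(n+1) = 1. -/
section LowerTrim

variable {S : ℕ → ℕ} {m : ℕ}

theorem count_two_le_of_eq_succ (hinit : ∀ j < m + 1, S j = j + 1) :
    Nat.count (fun i => 2 ≤ S i) (m + 1) = m := by
  have hshift : Nat.count (fun i => 2 ≤ S (i + 1)) m = m :=
    Nat.count_of_forall fun j hj => by rw [hinit (j + 1) (by omega)]; omega
  rw [Nat.count_succ', hshift, hinit 0 (by omega)]
  simp

theorem lowerTrim_eq_of_eq_succ (hinit : ∀ j < m + 1, S j = j + 1) (hnext : 2 ≤ S (m + 1)) :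
    lowerTrim S m = S (m + 1) - 1 := by
  have hnth : Nat.nth (fun i => 2 ≤ S i) m = m + 1 := by
    simpa only [count_two_le_of_eq_succ hinit] using Nat.nth_count (p := fun i => 2 ≤ S i) hnext
  simp only [lowerTrim, hnth]

end LowerTrim

theorem stmt1_general (S : ℕ → ℕ) (hS : DoublyFractal S)
    (n : ℕ) (hinit : ∀ j < n, S j = j + 1) (hmax : S n ≠ n + 1) :
    S n = 1 := by
  obtain ⟨hpos, -, h0, -, hlow⟩ := hS
  cases n with
  | zero => exact h0
  | succ m =>
    by_contra hne
    have hnext : 2 ≤ S (m + 1) := by have := hpos (m + 1); omega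
    have key := lowerTrim_eq_of_eq_succ (fun j hj => hinit j (by omega)) hnext
    rw [hlow, hinit m (by omega)] at key
    omega

/-- If S is doubly fractal, S(2) ≠ 1 and n is the greatest k with S(j)=j for all j ≤ k,
then S(n+1) = 1 (indices shifted to start at 0). -/
theorem stmt1 (S : ℕ → ℕ) (hS : DoublyFractal S) (h2 : S 1 ≠ 1)
    (n : ℕ) (hn : 0 < n) (hinit : ∀ j < n, S j = j + 1) (hmax : S n ≠ n + 1) :
    S n = 1 :=
  stmt1_general S hS n hinit hmax
end

section
/- If S is a doubly fractal sequence with S(k) = 1 for k = 1,…,n and S(n+1) ≠ 1, then S(n+1) = 2. -/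
lemma nth_zero_eq_of_forall_lt {p : ℕ → Prop} {n : ℕ} (hlt : ∀ j < n, ¬ p j) (hn : p n) :
    Nat.nth p 0 = n := by
  classical
  rw [Nat.nth_zero_of_exists ⟨n, hn⟩, Nat.find_eq_iff]
  exact ⟨hn, hlt⟩

lemma lowerTrim_apply_zero_of_forall_lt {S : ℕ → ℕ} {n : ℕ} (hlt : ∀ j < n, S j < 2)
    (hn : 2 ≤ S n) : lowerTrim S 0 = S n - 1 := by
  rw [lowerTrim, nth_zero_eq_of_forall_lt (fun j hj => (hlt j hj).not_ge) hn]

-- The paper indexes from 1: `S k` here is the paper's `S(k+1)`.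
theorem stmt2_general (S : ℕ → ℕ) (hS : DoublyFractal S)
    (n : ℕ) (hinit : ∀ j < n, S j = 1) (hne : S n ≠ 1) :
    S n = 2 := by
  obtain ⟨hpos, -, hS0, -, hlow⟩ := hS
  have hn : 2 ≤ S n := by
    have := hpos n
    omega
  have hfirst := congrFun hlow 0
  rw [lowerTrim_apply_zero_of_forall_lt (fun j hj => (hinit j hj).trans_lt one_lt_two) hn,
    hS0] at hfirst
  omega

/-- If S is doubly fractal, S(k)=1 for k=1,…,n and S(n+1) ≠ 1, then S(n+1)=2
(indices shifted to start at 0). -/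
theorem stmt2 (S : ℕ → ℕ) (hS : DoublyFractal S)
    (n : ℕ) (hn : 0 < n) (hinit : ∀ j < n, S j = 1) (hne : S n ≠ 1) :
    S n = 2 :=
  stmt2_general S hS n hinit hne
end

section
/- Every doubly fractal sequence has an initial segment of the form (1,2,3,…,n,1) for some n ≥ 1, or of the form (1,1,…,1,2) with n ≥ 2 ones. -/
/-!
The relation `lowerTrim S = S` says that the `k`-th term of `S` that is at least `2` is
`S k + 1`, and `upperTrim S = S`, read at index `0`, says that the first repeated term of `S`
is `S 0 = 1`. So `1` recurs; let `n > 0` be the index of its first recurrence. Every term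
strictly between indices `0` and `n` is at least `2`, so for `j + 1 < n` the `j`-th such term
sits at index `j + 1`, whence `S (j + 1) = S j + 1`. The first alternative therefore always
holds (for `n = 1` it is the prefix `(1, 1)`).
-/

open Nat

theorem Nat.nth_eq_succ_of_forall {p : ℕ → Prop} {k : ℕ} (hp0 : ¬p 0)
    (hp : ∀ i, 0 < i → i ≤ k + 1 → p i) : nth p k = k + 1 := by
  classical
  have hcount : count p (k + 1) = k := by
    rw [count_succ', if_neg hp0, add_zero, count_iff_forall]
    exact fun i hi => hp (i + 1) (by omega) (by omega)
  simpa [hcount] using nth_count (hp (k + 1) k.succ_pos le_rfl)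

section

variable {S : ℕ → ℕ}

theorem exists_pos_eq_of_upperTrim_eq_self (hup : upperTrim S = S) (hS : ∃ i, S i ≠ S 0) :
    ∃ i, 0 < i ∧ S i = S 0 := by
  by_cases hrep : ∃ i, ¬∀ j < i, S j ≠ S i
  · refine ⟨nth (fun i => ¬∀ j < i, S j ≠ S i) 0, ?_, congrFun hup 0⟩
    rw [nth_zero]
    obtain ⟨j, hj, -⟩ := not_forall₂.mp (Nat.sInf_mem hrep)
    exact j.zero_le.trans_lt hj
  · push Not at hrep
    obtain ⟨i, hi⟩ := hS
    have hconst : upperTrim S i = S 0 := by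
      simp only [upperTrim, nth_of_forall_not fun n _ => not_not.mpr (hrep n)]
    exact absurd ((congrFun hup i).symm.trans hconst) hi

theorem apply_nth_eq_succ_of_lowerTrim_eq_self (hpos : ∀ i, 0 < S i) (hlow : lowerTrim S = S)
    (k : ℕ) : S (nth (fun i => 2 ≤ S i) k) = S k + 1 := by
  have hk := congrFun hlow k
  have := hpos k
  simp only [lowerTrim] at hk
  omega

theorem eq_succ_of_forall_ne_one (hpos : ∀ i, 0 < S i)
    (hsucc : ∀ k, S (nth (fun i => 2 ≤ S i) k) = S k + 1) (h0 : S 0 = 1) {n : ℕ}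
    (hn : ∀ j, 0 < j → j < n → S j ≠ 1) : ∀ j < n, S j = j + 1 := by
  intro j
  induction j with
  | zero => exact fun _ => h0
  | succ j ih =>
    intro hj
    have hnth : nth (fun i => 2 ≤ S i) j = j + 1 :=
      Nat.nth_eq_succ_of_forall (by omega) fun i hi0 hij =>
        Nat.two_le_iff _ |>.mpr ⟨(hpos i).ne', hn i hi0 (by omega)⟩
    simpa only [hnth, ih (by omega)] using hsucc j

end

/-- Every doubly fractal sequence begins with (1,2,…,n,1) for some n ≥ 1,
or with n ≥ 2 ones followed by a 2 (indices shifted to start at 0). -/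
theorem stmt3 (S : ℕ → ℕ) (hS : DoublyFractal S) :
    (∃ n, 1 ≤ n ∧ (∀ j < n, S j = j + 1) ∧ S n = 1) ∨
    (∃ n, 2 ≤ n ∧ (∀ j < n, S j = 1) ∧ S n = 2) := by
  obtain ⟨hpos, hsurj, h0, hup, hlow⟩ := hS
  have hsucc := apply_nth_eq_succ_of_lowerTrim_eq_self hpos hlow
  have hrecur : ∃ n, 0 < n ∧ S n = 1 := by
    obtain ⟨i, hi⟩ := hsurj 2 two_pos
    exact h0 ▸ exists_pos_eq_of_upperTrim_eq_self hup ⟨i, by omega⟩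
  obtain ⟨hn0, hn1⟩ := Nat.find_spec hrecur
  refine Or.inl ⟨Nat.find hrecur, hn0, ?_, hn1⟩
  exact eq_succ_of_forall_ne_one hpos hsucc h0 fun j hj0 hj h => Nat.find_min hrecur hj ⟨hj0, h⟩
end

section
/- Distinct positive irrational numbers have distinct signature sequences: if α ≠ β are positive irrationals, then S_α ≠ S_β. -/
/-! The first coordinates determine the enumeration: `(p k).2` is the number of `k' ≤ k`
with `(p k').1 = (p k).1`, because the pairs `(i, 1), (i, 2), …` are listed in this order.
So `S_α = S_β` yields one enumeration sorted by both `i + jα` and `i + jβ`. If `α < β`, pick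
`n` with `n (β - α) > 1` and `m = ⌊n α⌋ + 1`; then `n α < m < n β`, so `(1, n + 1)` comes before
`(m + 1, 1)` for `α` but after it for `β`. -/

open Finset

section Enumeration

variable {θ : ℝ} {p : ℕ → ℕ × ℕ}

lemma snd_le_snd_of_fst_eq (hθ : 0 < θ)
    (hmono : StrictMono fun k => ((p k).1 : ℝ) + (p k).2 * θ) {a b : ℕ}
    (hfst : (p a).1 = (p b).1) (hab : a ≤ b) : (p a).2 ≤ (p b).2 := by
  have h := hmono.monotone hab
  simp only [hfst, add_le_add_iff_left] at h
  exact_mod_cast le_of_mul_le_mul_right h hθ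

lemma card_filter_fst_eq (hθ : 0 < θ) (hpos : ∀ k, 0 < (p k).1 ∧ 0 < (p k).2)
    (hsurj : ∀ i j, 0 < i → 0 < j → ∃ k, p k = (i, j))
    (hmono : StrictMono fun k => ((p k).1 : ℝ) + (p k).2 * θ) (k : ℕ) :
    #{k' ∈ range (k + 1) | (p k').1 = (p k).1} = (p k).2 := by
  have hinj : Function.Injective p := fun a b hab => hmono.injective (by simp [hab])
  suffices #{k' ∈ range (k + 1) | (p k').1 = (p k).1} = #(Icc 1 (p k).2) by
    rw [this, Nat.card_Icc, Nat.add_sub_cancel]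
  apply card_bij (fun k' _ => (p k').2)
  · intro a ha
    rw [mem_filter, mem_range] at ha
    exact mem_Icc.mpr ⟨(hpos a).2, snd_le_snd_of_fst_eq hθ hmono ha.2 (by omega)⟩
  · intro a ha b hb hab
    rw [mem_filter] at ha hb
    exact hinj (Prod.ext (ha.2.trans hb.2.symm) hab)
  · intro j hj
    rw [mem_Icc] at hj
    obtain ⟨k', hk'⟩ := hsurj (p k).1 j (hpos k).1 hj.1
    have hval : ((p k').1 : ℝ) + (p k').2 * θ ≤ (p k).1 + (p k).2 * θ := by
      rw [hk']
      gcongr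
      exact_mod_cast hj.2
    refine ⟨k', ?_, by simp [hk']⟩
    rw [mem_filter, mem_range, hk']
    exact ⟨Nat.lt_succ_of_le (hmono.le_iff_le.mp hval), rfl⟩

end Enumeration

lemma IsSignature.exists_common_enum {α β : ℝ} {S : ℕ → ℕ} (hα : 0 < α) (hβ : 0 < β)
    (ha : IsSignature α S) (hb : IsSignature β S) :
    ∃ p : ℕ → ℕ × ℕ, (∀ i j, 0 < i → 0 < j → ∃ k, p k = (i, j)) ∧
      StrictMono (fun k => ((p k).1 : ℝ) + (p k).2 * α) ∧
      StrictMono (fun k => ((p k).1 : ℝ) + (p k).2 * β) := by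
  obtain ⟨pa, hapos, hasurj, hamono, haS⟩ := ha
  obtain ⟨pb, hbpos, hbsurj, hbmono, hbS⟩ := hb
  have hfst (k : ℕ) : (pa k).1 = (pb k).1 := by rw [← haS, ← hbS]
  have hpab : pa = pb := by
    funext k
    refine Prod.ext (hfst k) ?_
    rw [← card_filter_fst_eq hα hapos hasurj hamono k,
      ← card_filter_fst_eq hβ hbpos hbsurj hbmono k]
    simp only [hfst]
  exact ⟨pa, hasurj, hamono, hpab ▸ hbmono⟩

lemma exists_nat_mul_lt_lt_nat_mul {α β : ℝ} (hα : 0 ≤ α) (hαβ : α < β) :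
    ∃ m n : ℕ, n * α < m ∧ (m : ℝ) < n * β := by
  obtain ⟨n, hn⟩ := exists_nat_gt (β - α)⁻¹
  have hn' : 1 < n * (β - α) := by
    rw [inv_lt_iff_one_lt_mul₀ (sub_pos.mpr hαβ)] at hn
    linarith
  refine ⟨⌊n * α⌋₊ + 1, n, ?_, ?_⟩
  · exact_mod_cast Nat.lt_floor_add_one _
  · have := Nat.floor_le (mul_nonneg n.cast_nonneg hα)
    push_cast
    linarith

lemma eq_of_strictMono_of_strictMono {α β : ℝ} (hα : 0 ≤ α) (hβ : 0 ≤ β) {p : ℕ → ℕ × ℕ}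
    (hsurj : ∀ i j, 0 < i → 0 < j → ∃ k, p k = (i, j))
    (hma : StrictMono fun k => ((p k).1 : ℝ) + (p k).2 * α)
    (hmb : StrictMono fun k => ((p k).1 : ℝ) + (p k).2 * β) : α = β := by
  wlog hαβ : α < β generalizing α β
  · rcases (not_lt.mp hαβ).lt_or_eq with h | h
    · exact (this hβ hα hmb hma h).symm
    · exact h.symm
  obtain ⟨m, n, hαmn, hβmn⟩ := exists_nat_mul_lt_lt_nat_mul hα hαβ
  obtain ⟨k₁, hk₁⟩ := hsurj (m + 1) 1 m.succ_pos one_pos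
  obtain ⟨k₂, hk₂⟩ := hsurj 1 (n + 1) one_pos n.succ_pos
  have hα₂₁ : k₂ < k₁ := hma.lt_iff_lt.mp (by simp only [hk₁, hk₂]; push_cast; linarith)
  have hβ₁₂ : k₁ < k₂ := hmb.lt_iff_lt.mp (by simp only [hk₁, hk₂]; push_cast; linarith)
  exact absurd hα₂₁ hβ₁₂.not_gt

theorem stmt7_general (α β : ℝ) (hαpos : 0 < α) (hβpos : 0 < β)
    (hne : α ≠ β)
    (Sa Sb : ℕ → ℕ) (ha : IsSignature α Sa) (hb : IsSignature β Sb) :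
    Sa ≠ Sb := by
  rintro rfl
  obtain ⟨p, hsurj, hma, hmb⟩ := IsSignature.exists_common_enum hαpos hβpos ha hb
  exact hne (eq_of_strictMono_of_strictMono hαpos.le hβpos.le hsurj hma hmb)

/-- Distinct positive irrational numbers have distinct signature sequences. -/
theorem stmt7 (α β : ℝ) (hαpos : 0 < α) (hβpos : 0 < β)
    (hαirr : Irrational α) (hβirr : Irrational β) (hne : α ≠ β)
    (Sa Sb : ℕ → ℕ) (ha : IsSignature α Sa) (hb : IsSignature β Sb) :
    Sa ≠ Sb :=
  stmt7_general α β hαpos hβpos hne Sa Sb ha hb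
end

section
/- If α < β are positive irrational numbers with the same signature sequence, then for all positive integers e, f, g, h: e + fα < g + hα if and only if e + fβ < g + hβ. -/
def pairValue (θ : ℝ) (x : ℕ × ℕ) : ℝ := x.1 + x.2 * θ

lemma pairValue_lt_pairValue_of_snd_lt {θ : ℝ} (hθ : 0 < θ) (i : ℕ) {j j' : ℕ} (h : j < j') :
    pairValue θ (i, j) < pairValue θ (i, j') := by
  unfold pairValue
  gcongr

structure IsSortedEnum (θ : ℝ) (p : ℕ → ℕ × ℕ) : Prop where
  pos : ∀ k, 0 < (p k).1 ∧ 0 < (p k).2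
  surj : ∀ i j, 0 < i → 0 < j → ∃ k, p k = (i, j)
  strictMono : StrictMono fun k => pairValue θ (p k)

lemma IsSignature.exists_isSortedEnum {θ : ℝ} {S : ℕ → ℕ} (hS : IsSignature θ S) :
    ∃ p, IsSortedEnum θ p ∧ ∀ k, S k = (p k).1 :=
  let ⟨p, hpos, hsurj, hmono, hS⟩ := hS
  ⟨p, ⟨hpos, hsurj, hmono⟩, hS⟩

namespace IsSortedEnum

variable {α β : ℝ} {p q : ℕ → ℕ × ℕ}

lemma pairValue_lt_iff (hp : IsSortedEnum α p) {a b : ℕ} :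
    pairValue α (p a) < pairValue α (p b) ↔ a < b :=
  hp.strictMono.lt_iff_lt

lemma injective (hp : IsSortedEnum α p) : Function.Injective p :=
  fun _ _ hab => hp.strictMono.injective (congrArg (pairValue α) hab)

lemma snd_le_of_fst_eq (hp : IsSortedEnum α p) (hq : IsSortedEnum β q) (hβ : 0 < β) {k : ℕ}
    (hprev : ∀ m < k, p m = q m) (hfst : (p k).1 = (q k).1) : (q k).2 ≤ (p k).2 := by
  by_contra! hsnd
  obtain ⟨m, hm⟩ := hq.surj (q k).1 (p k).2 (hq.pos k).1 (hp.pos k).2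
  have hmk : m < k := by
    rw [← hq.pairValue_lt_iff, hm]
    exact pairValue_lt_pairValue_of_snd_lt hβ _ hsnd
  have hpm : p m = p k := by rw [hprev m hmk, hm, ← hfst]
  exact hmk.ne (hp.injective hpm)

lemma eq_of_fst_eq (hp : IsSortedEnum α p) (hq : IsSortedEnum β q) (hα : 0 < α) (hβ : 0 < β)
    (hfst : ∀ k, (p k).1 = (q k).1) : p = q := by
  funext k
  induction k using Nat.strong_induction_on with
  | _ k ih =>
    have hle : (q k).2 ≤ (p k).2 := hp.snd_le_of_fst_eq hq hβ ih (hfst k)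
    have hge : (p k).2 ≤ (q k).2 :=
      hq.snd_le_of_fst_eq hp hα (fun m hm => (ih m hm).symm) (hfst k).symm
    exact Prod.ext (hfst k) (le_antisymm hge hle)

end IsSortedEnum

theorem stmt8_general (α β : ℝ) (hαpos : 0 < α) (hβpos : 0 < β)
    (S : ℕ → ℕ) (ha : IsSignature α S) (hb : IsSignature β S)
    (e f g h : ℕ) (he : 0 < e) (hf : 0 < f) (hg : 0 < g) (hh : 0 < h) :
    (e : ℝ) + f * α < (g : ℝ) + h * α ↔ (e : ℝ) + f * β < (g : ℝ) + h * β := by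
  obtain ⟨p, hp, hSp⟩ := ha.exists_isSortedEnum
  obtain ⟨q, hq, hSq⟩ := hb.exists_isSortedEnum
  obtain rfl : p = q := hp.eq_of_fst_eq hq hαpos hβpos fun k => by rw [← hSp, ← hSq]
  obtain ⟨k₁, hk₁⟩ := hp.surj e f he hf
  obtain ⟨k₂, hk₂⟩ := hp.surj g h hg hh
  have horder : pairValue α (p k₁) < pairValue α (p k₂) ↔ pairValue β (p k₁) < pairValue β (p k₂) :=
    hp.pairValue_lt_iff.trans hq.pairValue_lt_iff.symm
  simpa only [hk₁, hk₂, pairValue] using horder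

/-- If α < β are positive irrationals with the same signature sequence, then for
all positive integers e,f,g,h: e+fα < g+hα ↔ e+fβ < g+hβ. -/
theorem stmt8 (α β : ℝ) (hαpos : 0 < α) (hβpos : 0 < β)
    (hαirr : Irrational α) (hβirr : Irrational β) (hlt : α < β)
    (S : ℕ → ℕ) (ha : IsSignature α S) (hb : IsSignature β S)
    (e f g h : ℕ) (he : 0 < e) (hf : 0 < f) (hg : 0 < g) (hh : 0 < h) :
    (e : ℝ) + f * α < (g : ℝ) + h * α ↔ (e : ℝ) + f * β < (g : ℝ) + h * β :=
  stmt8_general α β hαpos hβpos S ha hb e f g h he hf hg hh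
end

section
/- For any positive irrational θ, the lower-trimmed subsequence of the signature sequence S_θ equals S_θ itself. -/
lemma Irrational.injective_natCast_add_natCast_mul {θ : ℝ} (hθ : Irrational θ) :
    Function.Injective (fun x : ℕ × ℕ => (x.1 : ℝ) + x.2 * θ) := by
  rintro ⟨i, j⟩ ⟨i', j'⟩ h
  simp only at h
  obtain rfl : j = j' := by
    by_contra hne
    apply (hθ.intCast_mul (m := (j : ℤ) - j') (by omega)).ne_int ((i' : ℤ) - i)
    push_cast
    linarith
  obtain rfl : i = i' := by exact_mod_cast (add_right_cancel h)
  rfl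

lemma range_eq_setOf_pos_pos {p : ℕ → ℕ × ℕ} (hpos : ∀ k, 0 < (p k).1 ∧ 0 < (p k).2)
    (hsurj : ∀ i j, 0 < i → 0 < j → ∃ k, p k = (i, j)) :
    Set.range p = {x | 0 < x.1 ∧ 0 < x.2} := by
  ext x
  constructor
  · rintro ⟨k, rfl⟩
    exact hpos k
  · rintro ⟨hi, hj⟩
    exact hsurj x.1 x.2 hi hj

namespace IsSignature

variable {θ : ℝ} {S : ℕ → ℕ}

theorem unique (hθ : Irrational θ) {T : ℕ → ℕ} (hS : IsSignature θ S) (hT : IsSignature θ T) :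
    S = T := by
  obtain ⟨p, hp_pos, hp_surj, hp_mono, hSp⟩ := hS
  obtain ⟨q, hq_pos, hq_surj, hq_mono, hTq⟩ := hT
  set f : ℕ × ℕ → ℝ := fun x => (x.1 : ℝ) + x.2 * θ
  have hrange : Set.range (f ∘ p) = Set.range (f ∘ q) := by
    rw [Set.range_comp, Set.range_comp, range_eq_setOf_pos_pos hp_pos hp_surj,
      range_eq_setOf_pos_pos hq_pos hq_surj]
  have hpq : p = q :=
    hθ.injective_natCast_add_natCast_mul.comp_left ((hp_mono.range_inj hq_mono).mp hrange)
  funext k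
  rw [hSp, hTq, hpq]

theorem infinite_setOf_eq (hS : IsSignature θ S) {m : ℕ} (hm : 0 < m) :
    {k | S k = m}.Infinite := by
  obtain ⟨p, -, hp_surj, -, hSp⟩ := hS
  choose g hg using fun j : ℕ => hp_surj m (j + 1) hm j.succ_pos
  refine Set.infinite_of_injective_forall_mem (f := g) (fun a b hab => ?_) (fun j => ?_)
  · simpa using (hg a).symm.trans ((congrArg p hab).trans (hg b))
  · simp [hSp, hg]

theorem lowerTrim (hS : IsSignature θ S) : IsSignature θ (_root_.lowerTrim S) := by
  set P : ℕ → Prop := fun i => 2 ≤ S i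
  have hinf : (Set.ofPred P).Infinite :=
    (hS.infinite_setOf_eq two_pos).mono fun k (hk : S k = 2) => hk.ge
  obtain ⟨p, hp_pos, hp_surj, hp_mono, hSp⟩ := hS
  have hge : ∀ n, 2 ≤ (p (Nat.nth P n)).1 := fun n => hSp _ ▸ Nat.nth_mem_of_infinite hinf n
  refine ⟨fun n => ((p (Nat.nth P n)).1 - 1, (p (Nat.nth P n)).2),
    fun n => ⟨Nat.sub_pos_of_lt (hge n), (hp_pos _).2⟩, fun i j hi hj => ?_, fun a b hab => ?_,
    fun n => congrArg (· - 1) (hSp _)⟩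
  · obtain ⟨k, hk⟩ := hp_surj (i + 1) j (by omega) hj
    have hPk : P k := by simp only [P, hSp, hk]; omega
    obtain ⟨n, rfl⟩ : k ∈ Set.range (Nat.nth P) := Nat.range_nth_of_infinite hinf ▸ hPk
    exact ⟨n, by simp [hk]⟩
  · have h := hp_mono (Nat.nth_strictMono hinf hab)
    simp only [Nat.cast_sub (one_le_two.trans (hge a)), Nat.cast_sub (one_le_two.trans (hge b))]
    simp only at h
    linarith

end IsSignature

theorem stmt12_general (θ : ℝ) (hirr : Irrational θ)
    (S : ℕ → ℕ) (hS : IsSignature θ S) : lowerTrim S = S :=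
  hS.lowerTrim.unique hirr hS

/-- The lower-trimmed subsequence of a signature sequence is itself. -/
theorem stmt12 (θ : ℝ) (hpos : 0 < θ) (hirr : Irrational θ)
    (S : ℕ → ℕ) (hS : IsSignature θ S) : lowerTrim S = S :=
  stmt12_general θ hirr S hS
end

section
/- For any positive irrational θ, the signature sequence S_θ is doubly fractal: S_θ(1) = 1 and both the upper-trimmed and lower-trimmed subsequences of S_θ equal S_θ. -/
theorem pairValue_injective {θ : ℝ} (hθ : Irrational θ) : Function.Injective (pairValue θ) := by
  rintro ⟨a, b⟩ ⟨c, d⟩ h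
  simp only [pairValue] at h
  obtain rfl : b = d := by
    by_contra hbd
    have hbd' : (b : ℤ) - d ≠ 0 := sub_ne_zero.mpr (by exact_mod_cast hbd)
    apply (hθ.intCast_mul hbd').ne_int (c - a)
    push_cast
    linarith
  simp_all

structure IsSortedPairEnum (θ : ℝ) (p : ℕ → ℕ × ℕ) : Prop where
  pos : ∀ k, 0 < (p k).1 ∧ 0 < (p k).2
  surj : ∀ i j, 0 < i → 0 < j → ∃ k, p k = (i, j)
  strictMono : StrictMono (pairValue θ ∘ p)

namespace IsSortedPairEnum

variable {θ : ℝ} {p q : ℕ → ℕ × ℕ}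

theorem range_pairValue (hp : IsSortedPairEnum θ p) :
    Set.range (pairValue θ ∘ p) = pairValue θ '' {x | 0 < x.1 ∧ 0 < x.2} := by
  ext y
  constructor
  · rintro ⟨k, rfl⟩
    exact ⟨p k, hp.pos k, rfl⟩
  · rintro ⟨⟨i, j⟩, ⟨hi, hj⟩, rfl⟩
    obtain ⟨k, hk⟩ := hp.surj i j hi hj
    exact ⟨k, by simp [hk]⟩

theorem eq (hθ : Irrational θ) (hp : IsSortedPairEnum θ p) (hq : IsSortedPairEnum θ q) :
    p = q :=
  (pairValue_injective hθ).comp_left <|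
    (hp.strictMono.range_inj hq.strictMono).mp (by rw [hp.range_pairValue, hq.range_pairValue])

theorem fst_zero_eq_one (hp : IsSortedPairEnum θ p) (hθ : 0 < θ) : (p 0).1 = 1 := by
  obtain ⟨k, hk⟩ := hp.surj 1 1 one_pos one_pos
  have hle : pairValue θ (p 0) ≤ pairValue θ (1, 1) := hk ▸ hp.strictMono.monotone k.zero_le
  have hj : (1 : ℝ) ≤ (p 0).2 := by exact_mod_cast (hp.pos 0).2
  have hi : ((p 0).1 : ℝ) ≤ 1 := by
    simp only [pairValue, Nat.cast_one] at hle
    nlinarith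
  have := (hp.pos 0).1
  have : (p 0).1 ≤ 1 := by exact_mod_cast hi
  omega

theorem exists_lt_fst_eq_iff (hp : IsSortedPairEnum θ p) (hθ : 0 < θ) (i : ℕ) :
    (∃ j < i, (p j).1 = (p i).1) ↔ 0 < (p i).1 ∧ 1 < (p i).2 := by
  constructor
  · rintro ⟨j, hji, heq⟩
    have hlt := hp.strictMono hji
    simp only [Function.comp, pairValue, heq, add_lt_add_iff_left] at hlt
    have : (p j).2 < (p i).2 := by exact_mod_cast lt_of_mul_lt_mul_right hlt hθ.le
    exact ⟨(hp.pos i).1, by have := (hp.pos j).2; omega⟩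
  · rintro ⟨hi, hj⟩
    obtain ⟨k, hk⟩ := hp.surj (p i).1 1 hi one_pos
    have hlt : (pairValue θ ∘ p) k < (pairValue θ ∘ p) i := by
      have : (1 : ℝ) < (p i).2 := by exact_mod_cast hj
      simp only [Function.comp, pairValue, hk, Nat.cast_one]
      nlinarith
    exact ⟨k, hp.strictMono.lt_iff_lt.mp hlt, by rw [hk]⟩

theorem shift (hp : IsSortedPairEnum θ p) (a b : ℕ) :
    IsSortedPairEnum θ fun k =>
      ((p (Nat.nth (fun i => a < (p i).1 ∧ b < (p i).2) k)).1 - a,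
        (p (Nat.nth (fun i => a < (p i).1 ∧ b < (p i).2) k)).2 - b) := by
  set A : ℕ → Prop := fun i => a < (p i).1 ∧ b < (p i).2
  have hA : {i | A i}.Infinite := by
    refine Set.Infinite.of_image p (Set.Infinite.mono ?_
      (Set.infinite_range_of_injective (f := fun n : ℕ => (a + 1, b + 1 + n)) ?_))
    · rintro _ ⟨n, rfl⟩
      obtain ⟨k, hk⟩ := hp.surj (a + 1) (b + 1 + n) (by omega) (by omega)
      exact ⟨k, by simp only [A, Set.mem_ofPred_eq, hk]; omega, hk⟩
    · intro m n h
      simpa using h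
  refine ⟨fun k => ?_, fun i j hi hj => ?_, fun m n hmn => ?_⟩
  · obtain ⟨ha, hb⟩ := Nat.nth_mem_of_infinite hA k
    exact ⟨Nat.sub_pos_of_lt ha, Nat.sub_pos_of_lt hb⟩
  · obtain ⟨k, hk⟩ := hp.surj (i + a) (j + b) (by omega) (by omega)
    have hkA : A k := by simp only [A, hk]; omega
    exact ⟨Nat.count A k, by simp [Nat.nth_count hkA, hk]⟩
  · have hvalue : ∀ k, pairValue θ ((p (Nat.nth A k)).1 - a, (p (Nat.nth A k)).2 - b) =
        pairValue θ (p (Nat.nth A k)) - pairValue θ (a, b) := by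
      intro k
      obtain ⟨ha, hb⟩ := Nat.nth_mem_of_infinite hA k
      simp only [pairValue, Nat.cast_sub ha.le, Nat.cast_sub hb.le]
      ring
    have := hp.strictMono (Nat.nth_strictMono hA hmn)
    simp only [Function.comp, hvalue] at this ⊢
    linarith

end IsSortedPairEnum

/-- The signature sequence of a positive irrational is doubly fractal. -/
theorem stmt14 (θ : ℝ) (hpos : 0 < θ) (hirr : Irrational θ)
    (S : ℕ → ℕ) (hS : IsSignature θ S) : DoublyFractal S := by
  obtain ⟨p, hp_pos, hp_surj, hp_mono, hSp⟩ := hS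
  have hp : IsSortedPairEnum θ p := ⟨hp_pos, hp_surj, hp_mono⟩
  obtain rfl : S = fun k => (p k).1 := funext hSp
  have hfst (a b k : ℕ) := congrArg Prod.fst (congrFun ((hp.shift a b).eq hirr hp) k)
  refine ⟨fun k => (hp.pos k).1, fun m hm => ?_, hp.fst_zero_eq_one hpos, funext fun k => ?_,
    funext fun k => ?_⟩
  · obtain ⟨k, hk⟩ := hp.surj m 1 hm one_pos
    exact ⟨k, by simp [hk]⟩
  · have hrepeat : (fun i => ¬ ∀ j < i, (p j).1 ≠ (p i).1) = fun i => 0 < (p i).1 ∧ 1 < (p i).2 :=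
      funext fun i => by simpa using hp.exists_lt_fst_eq_iff hpos i
    unfold upperTrim
    rw [hrepeat]
    exact hfst 0 1 k
  · have hlarge : (fun i => 2 ≤ (p i).1) = fun i => 1 < (p i).1 ∧ 0 < (p i).2 :=
      funext fun i => propext ⟨fun h => ⟨h, (hp.pos i).2⟩, And.left⟩
    unfold lowerTrim
    rw [hlarge]
    exact hfst 1 0 k
end

section
/- Let S be a doubly fractal sequence and for k ∈ ℕ+ let I_k(n) denote the index of the k-th occurrence of n in S. Define the k-th part 𝔓_k(n) = (S(I_k(n)), …, S(I_{k+1}(n) − 1)). Then the upper-trimmed subsequence of 𝔓_{k+1}(n) equals 𝔓_k(n). -/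
/-- The index of the k-th occurrence of n in S (0-indexed in k). -/
noncomputable def occIdx (S : ℕ → ℕ) (n : ℕ) : ℕ → ℕ :=
  fun k => Nat.nth (fun i => S i = n) k

/-- The k-th part of S with respect to n: the terms from the k-th occurrence of n
up to (but not including) the (k+1)-st occurrence of n. -/
noncomputable def part (S : ℕ → ℕ) (n k : ℕ) : List ℕ :=
  (List.range (occIdx S n (k + 1) - occIdx S n k)).map (fun t => S (occIdx S n k + t))

/-- The upper trimming of the (k+1)-st part: delete those terms of the segment that
are first occurrences of their value in S. -/
noncomputable def partUpperTrim (S : ℕ → ℕ) (n k : ℕ) : List ℕ :=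
  (((List.range (occIdx S n (k + 2) - occIdx S n (k + 1))).map
      (fun t => occIdx S n (k + 1) + t)).filter
    (fun i => decide (¬ ∀ j < i, S j ≠ S i))).map S

/-!
Let `P` be the set of indices at which `S` repeats an earlier value. Upper trimming is
`S ↦ S ∘ nth P`, so `S ∘ nth P = S`. Hence the increasing map `nth P` sends the occurrences
of `n` in order onto the repeated occurrences of `n`, which are the occurrences of `n` from
the second one on: `nth P (I_k) = I_{k+1}`. Therefore `nth P` maps `[I_k, I_{k+1})` in order
and value-preservingly onto the repeats in `[I_{k+1}, I_{k+2})`.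
-/

namespace List

theorem filter_range_eq_map_nth (p : ℕ → Prop) [DecidablePred p] (N : ℕ) :
    (range N).filter (fun i => decide (p i)) = (range (Nat.count p N)).map (Nat.nth p) := by
  induction N with
  | zero => simp
  | succ N ih =>
    by_cases h : p N <;> simp [range_succ, filter_append, ih, Nat.count_succ, h, Nat.nth_count]

theorem filter_range'_eq_map_nth (p : ℕ → Prop) [DecidablePred p] (a n : ℕ) :
    (range' a n).filter (fun i => decide (p i)) =
      (range' (Nat.count p a) (Nat.count p (a + n) - Nat.count p a)).map (Nat.nth p) := by
  have hsplit := filter_range_eq_map_nth p (a + n)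
  rw [← Nat.add_sub_of_le (Nat.count_monotone p (Nat.le_add_right a n))] at hsplit
  rw [range_add, ← range'_eq_map_range, filter_append, filter_range_eq_map_nth, range_add,
    map_append, ← range'_eq_map_range] at hsplit
  exact append_cancel_left hsplit

end List

def IsRepeat (S : ℕ → ℕ) (i : ℕ) : Prop := ¬ ∀ j < i, S j ≠ S i

instance (S : ℕ → ℕ) : DecidablePred (IsRepeat S) :=
  fun i => inferInstanceAs (Decidable (¬ ∀ j < i, S j ≠ S i))

section
variable {S : ℕ → ℕ} {n : ℕ}

theorem isRepeat_iff {i : ℕ} : IsRepeat S i ↔ ∃ j < i, S j = S i := by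
  simp [IsRepeat]

theorem upperTrim_apply (k : ℕ) : upperTrim S k = S (Nat.nth (IsRepeat S) k) := rfl

theorem isRepeat_nth_succ (hn : {i | S i = n}.Infinite) (m : ℕ) :
    IsRepeat S (Nat.nth (S · = n) (m + 1)) :=
  isRepeat_iff.2 ⟨_, (Nat.nth_lt_nth hn).2 m.succ_pos,
    (Nat.nth_mem_of_infinite hn 0).trans (Nat.nth_mem_of_infinite hn (m + 1)).symm⟩

theorem exists_nth_succ_eq_of_isRepeat {i : ℕ} (hi : IsRepeat S i) :
    ∃ m, Nat.nth (S · = S i) (m + 1) = i := by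
  obtain ⟨m, hm⟩ := Nat.exists_eq_add_one_of_ne_zero
    (Nat.count_ne_iff_exists.2 (isRepeat_iff.1 hi))
  exact ⟨m, hm ▸ Nat.nth_count rfl⟩

theorem infinite_setOf_isRepeat_and (hn : {i | S i = n}.Infinite) :
    {i | IsRepeat S i ∧ S i = n}.Infinite :=
  have hmono : StrictMono fun m => Nat.nth (S · = n) (m + 1) :=
    (Nat.nth_strictMono hn).comp (strictMono_id.add_const 1)
  (Set.infinite_range_of_injective hmono.injective).mono
    (Set.range_subset_iff.2 fun m => ⟨isRepeat_nth_succ hn m, Nat.nth_mem_of_infinite hn _⟩)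

theorem infinite_setOf_isRepeat (hn : {i | S i = n}.Infinite) : {i | IsRepeat S i}.Infinite :=
  (infinite_setOf_isRepeat_and hn).mono fun _ hi => hi.1

theorem nth_succ_eq_nth_isRepeat_and (hn : {i | S i = n}.Infinite) (m : ℕ) :
    Nat.nth (S · = n) (m + 1) = Nat.nth (fun i => IsRepeat S i ∧ S i = n) m := by
  have hR := infinite_setOf_isRepeat_and hn
  have := Nat.nth_comp_of_strictMono (n := m)
    ((Nat.nth_strictMono hn).comp (strictMono_id.add_const 1))
    (p := fun i => IsRepeat S i ∧ S i = n) ?_ (fun hf => absurd hf hR)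
  · simpa [isRepeat_nth_succ hn, Nat.nth_mem_of_infinite hn] using this
  · rintro k ⟨hk, rfl⟩
    exact exists_nth_succ_eq_of_isRepeat hk

theorem nth_isRepeat_nth_eq (hup : upperTrim S = S) (hn : {i | S i = n}.Infinite) (m : ℕ) :
    Nat.nth (IsRepeat S) (Nat.nth (S · = n) m) =
      Nat.nth (fun i => IsRepeat S i ∧ S i = n) m := by
  have hR := infinite_setOf_isRepeat_and hn
  have hP := infinite_setOf_isRepeat hn
  have := Nat.nth_comp_of_strictMono (n := m) (Nat.nth_strictMono hP)
    (p := fun i => IsRepeat S i ∧ S i = n) (fun k hk => Nat.range_nth_of_infinite hP ▸ hk.1)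
    (fun hf => absurd hf hR)
  simpa [← upperTrim_apply, hup, Nat.nth_mem_of_infinite hP] using this

theorem nth_isRepeat_occIdx (hup : upperTrim S = S) (hn : {i | S i = n}.Infinite) (m : ℕ) :
    Nat.nth (IsRepeat S) (occIdx S n m) = occIdx S n (m + 1) :=
  (nth_isRepeat_nth_eq hup hn m).trans (nth_succ_eq_nth_isRepeat_and hn m).symm

theorem count_isRepeat_occIdx_succ (hup : upperTrim S = S) (hn : {i | S i = n}.Infinite)
    (m : ℕ) : Nat.count (IsRepeat S) (occIdx S n (m + 1)) = occIdx S n m := by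
  rw [← nth_isRepeat_occIdx hup hn, Nat.count_nth_of_infinite (infinite_setOf_isRepeat hn)]

end

/-- For a doubly fractal sequence, the upper trimming of the (k+1)-st part
equals the k-th part. -/
theorem stmt15 (S : ℕ → ℕ) (hS : DoublyFractal S)
    (hinf : ∀ m, 0 < m → {i | S i = m}.Infinite)
    (n : ℕ) (hn : 0 < n) (k : ℕ) :
    partUpperTrim S n k = part S n k := by
  obtain ⟨-, -, -, hup, -⟩ := hS
  have hQ := hinf n hn
  have hcount := count_isRepeat_occIdx_succ hup hQ
  have hle : occIdx S n (k + 1) ≤ occIdx S n (k + 2) := (Nat.nth_le_nth hQ).2 (Nat.le_succ _)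
  calc partUpperTrim S n k
      = ((List.range' (occIdx S n (k + 1)) (occIdx S n (k + 2) - occIdx S n (k + 1))).filter
          (fun i => decide (IsRepeat S i))).map S := by
        rw [partUpperTrim, List.range'_eq_map_range]; rfl
    _ = ((List.range' (occIdx S n k) (occIdx S n (k + 1) - occIdx S n k)).map
          (Nat.nth (IsRepeat S))).map S := by
        rw [List.filter_range'_eq_map_nth, Nat.add_sub_cancel' hle, hcount, hcount]
    _ = part S n k := by
        rw [List.map_map, part, List.range'_eq_map_range, List.map_map]
        exact List.map_congr_left fun t _ => congrFun hup _
end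

section
/- In a doubly fractal sequence S whose initial segment is (1,2,…,n,1) with n ≥ 2, between any two consecutive occurrences of n there is exactly one occurrence of 1. -/
/-
Let `ψ = upperIndex S` enumerate the positions that are not first occurrences and
`φ = lowerIndex S` the positions carrying a value `≥ 2`; being doubly fractal means
`S ∘ ψ = S` and `S ∘ φ = S + 1`. Both are strictly increasing with `k < ψ k` and `k < φ k`, so
`ψ` sends the `j`-th occurrence of `m` to the `(j+1)`-th and `φ` sends it to the `j`-th
occurrence of `m + 1`. Hence the `j`-th `1` precedes the `j`-th `n`; and since the initial
segment puts the `0`-th `n` before the `1`-st `1`, applying `ψ` repeatedly puts the `j`-th `n`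
before the `(j+1)`-th `1`. So the occurrences of `1` and `n` alternate.
-/

open Set

namespace Nat

variable {p q : ℕ → Prop}

lemma nth_eq_of_strictMono_of_range_eq {f : ℕ → ℕ} (hf : StrictMono f)
    (h : range f = {i | p i}) : nth p = f := by
  have hp : {i | p i}.Infinite := h ▸ infinite_range_of_injective hf.injective
  exact ((nth_strictMono hp).range_inj hf).1 ((range_nth_of_infinite hp).trans h.symm)

lemma apply_nth_of_image_eq (hp : {i | p i}.Infinite) {f : ℕ → ℕ} (hf : StrictMono f)
    (h : f '' {i | p i} = {i | q i}) (j : ℕ) : f (nth p j) = nth q j := by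
  have hrange : range (f ∘ nth p) = {i | q i} := by
    rw [range_comp, range_nth_of_infinite hp, h]
  rw [nth_eq_of_strictMono_of_range_eq (hf.comp (nth_strictMono hp)) hrange, Function.comp_apply]

lemma nth_and_exists_lt (hp : {i | p i}.Infinite) (j : ℕ) :
    nth (fun i => p i ∧ ∃ k < i, p k) j = nth p (j + 1) := by
  have hmono := nth_strictMono hp
  suffices hrange : range (fun j => nth p (j + 1)) = {i | p i ∧ ∃ k < i, p k} by
    exact congrFun
      (nth_eq_of_strictMono_of_range_eq (hmono.comp (strictMono_id.add_const 1)) hrange) j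
  ext i
  constructor
  · rintro ⟨j, rfl⟩
    exact ⟨nth_mem_of_infinite hp _, nth p 0, hmono j.succ_pos, nth_mem_of_infinite hp 0⟩
  · rintro ⟨hi, k, hki, hk⟩
    obtain ⟨l, rfl⟩ := subset_range_nth hi
    obtain ⟨m, rfl⟩ := subset_range_nth hk
    obtain ⟨l', rfl⟩ := exists_eq_succ_of_ne_zero (ne_zero_of_lt ((nth_lt_nth hp).1 hki))
    exact ⟨l', rfl⟩

lemma lt_nth_of_not_zero (hp : {i | p i}.Infinite) (h0 : ¬p 0) (k : ℕ) : k < nth p k := by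
  have hpos : nth p 0 ≠ 0 := fun h => h0 (h ▸ nth_mem_of_infinite hp 0)
  have hshift : k + nth p 0 ≤ nth p k := (nth_strictMono hp).add_le_nat k 0
  omega

lemma nth_count_add_one_of_consecutive [DecidablePred p] (hp : {i | p i}.Infinite) {a b : ℕ}
    (ha : p a) (hb : p b) (hab : a < b) (hbetween : ∀ c, a < c → c < b → ¬p c) :
    nth p (count p a + 1) = b := by
  have hnext : a < nth p (count p a + 1) := by
    conv_lhs => rw [← nth_count ha]
    exact (nth_lt_nth hp).2 (lt_add_one _)
  refine le_antisymm ?_ ?_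
  · rw [← nth_count hb, nth_le_nth hp]
    exact count_strict_mono ha hab
  · by_contra! hlt
    exact hbetween _ hnext hlt (nth_mem_of_infinite hp _)

end Nat

/-- `upperTrim S = S ∘ upperIndex S`. -/
noncomputable def upperIndex (S : ℕ → ℕ) : ℕ → ℕ := Nat.nth fun i => ¬ ∀ j < i, S j ≠ S i

/-- `lowerTrim S = S ∘ lowerIndex S - 1`. -/
noncomputable def lowerIndex (S : ℕ → ℕ) : ℕ → ℕ := Nat.nth fun i => 2 ≤ S i

/-- The position of the `j`-th occurrence of `m`, counting from `j = 0`. -/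
noncomputable def occurrence (S : ℕ → ℕ) (m : ℕ) : ℕ → ℕ := Nat.nth fun i => S i = m

namespace DoublyFractal

variable {S : ℕ → ℕ}

lemma infinite_setOf_two_le (hS : DoublyFractal S) : {i | 2 ≤ S i}.Infinite := by
  refine Infinite.of_image S ((Ici_infinite 2).mono fun m (hm : 2 ≤ m) => ?_)
  obtain ⟨i, hi⟩ := hS.2.1 m (by omega)
  exact ⟨i, show 2 ≤ S i by rwa [hi], hi⟩

lemma apply_upperIndex (hS : DoublyFractal S) (k : ℕ) : S (upperIndex S k) = S k :=
  congrFun hS.2.2.2.1 k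

lemma apply_lowerIndex (hS : DoublyFractal S) (k : ℕ) : S (lowerIndex S k) = S k + 1 := by
  have htrim : S (lowerIndex S k) - 1 = S k := congrFun hS.2.2.2.2 k
  have hge : 2 ≤ S (lowerIndex S k) := Nat.nth_mem_of_infinite hS.infinite_setOf_two_le k
  omega

lemma infinite_setOf_repeat (hS : DoublyFractal S) : {i | ¬ ∀ j < i, S j ≠ S i}.Infinite := by
  intro hfin
  have hvalues : Ioi 0 ⊆ S '' insert 0 {i | ¬ ∀ j < i, S j ≠ S i} := by
    intro m hm
    obtain ⟨k, rfl⟩ := hS.2.1 m hm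
    exact ⟨upperIndex S k, Nat.range_nth_subset ⟨k, rfl⟩, hS.apply_upperIndex k⟩
  exact Ioi_infinite 0 (((hfin.insert 0).image S).subset hvalues)

lemma lt_upperIndex (hS : DoublyFractal S) (k : ℕ) : k < upperIndex S k :=
  Nat.lt_nth_of_not_zero hS.infinite_setOf_repeat (by simp) k

lemma lt_lowerIndex (hS : DoublyFractal S) (k : ℕ) : k < lowerIndex S k :=
  Nat.lt_nth_of_not_zero hS.infinite_setOf_two_le (by simp [hS.2.2.1]) k

lemma infinite_setOf_eq (hS : DoublyFractal S) {m : ℕ} (hm : 0 < m) : {i | S i = m}.Infinite := by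
  intro hfin
  obtain ⟨x, hx, hmax⟩ := exists_max_image _ id hfin (hS.2.1 m hm)
  exact (hmax _ ((hS.apply_upperIndex x).trans hx)).not_gt (hS.lt_upperIndex x)

lemma image_upperIndex_setOf_eq (hS : DoublyFractal S) (m : ℕ) :
    upperIndex S '' {i | S i = m} = {i | S i = m ∧ ∃ k < i, S k = m} := by
  ext y
  constructor
  · rintro ⟨x, hx, rfl⟩
    exact ⟨(hS.apply_upperIndex x).trans hx, x, hS.lt_upperIndex x, hx⟩
  · rintro ⟨hy, k, hk, hkm⟩
    obtain ⟨x, rfl⟩ : y ∈ range (upperIndex S) := by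
      rw [upperIndex, Nat.range_nth_of_infinite hS.infinite_setOf_repeat]
      exact fun h => h k hk (hkm.trans hy.symm)
    exact ⟨x, (hS.apply_upperIndex x).symm.trans hy, rfl⟩

lemma image_lowerIndex_setOf_eq (hS : DoublyFractal S) {m : ℕ} (hm : 0 < m) :
    lowerIndex S '' {i | S i = m} = {i | S i = m + 1} := by
  ext y
  constructor
  · rintro ⟨x, hx, rfl⟩
    exact (hS.apply_lowerIndex x).trans (congrArg (· + 1) hx)
  · rintro (hy : S y = m + 1)
    obtain ⟨x, rfl⟩ : y ∈ range (lowerIndex S) := by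
      rw [lowerIndex, Nat.range_nth_of_infinite hS.infinite_setOf_two_le]
      show 2 ≤ S y
      omega
    have hx := hS.apply_lowerIndex x
    exact ⟨x, show S x = m by omega, rfl⟩

lemma upperIndex_occurrence (hS : DoublyFractal S) {m : ℕ} (hm : 0 < m) (j : ℕ) :
    upperIndex S (occurrence S m j) = occurrence S m (j + 1) :=
  (Nat.apply_nth_of_image_eq (hS.infinite_setOf_eq hm)
    (Nat.nth_strictMono hS.infinite_setOf_repeat) (hS.image_upperIndex_setOf_eq m) j).trans
    (Nat.nth_and_exists_lt (hS.infinite_setOf_eq hm) j)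

lemma lowerIndex_occurrence (hS : DoublyFractal S) {m : ℕ} (hm : 0 < m) (j : ℕ) :
    lowerIndex S (occurrence S m j) = occurrence S (m + 1) j :=
  Nat.apply_nth_of_image_eq (hS.infinite_setOf_eq hm)
    (Nat.nth_strictMono hS.infinite_setOf_two_le) (hS.image_lowerIndex_setOf_eq hm) j

lemma occurrence_one_lt (hS : DoublyFractal S) {m : ℕ} (hm : 2 ≤ m) (j : ℕ) :
    occurrence S 1 j < occurrence S m j := by
  induction m, hm using Nat.le_induction with
  | base => exact (hS.lt_lowerIndex _).trans_eq (hS.lowerIndex_occurrence one_pos j)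
  | succ m hm ih =>
    exact ih.trans ((hS.lt_lowerIndex _).trans_eq (hS.lowerIndex_occurrence (by omega) j))

lemma occurrence_zero_of_initial {n : ℕ} (hinit : ∀ k < n, S k = k + 1) (hn : 0 < n) :
    occurrence S n 0 = n - 1 := by
  classical
  have hlast : S (n - 1) = n := by rw [hinit (n - 1) (by omega)]; omega
  have hnone : Nat.count (fun i => S i = n) (n - 1) = 0 :=
    Nat.count_iff_forall_not.2 fun i hi => by rw [hinit i (by omega)]; omega
  have hnth := Nat.nth_count (p := fun i => S i = n) hlast
  rwa [hnone] at hnth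

lemma occurrence_one_one_of_initial (hS : DoublyFractal S) {n : ℕ}
    (hinit : ∀ k < n, S k = k + 1) (hS1 : S n = 1) (hn : 0 < n) : occurrence S 1 1 = n := by
  classical
  have hnext := Nat.nth_count_add_one_of_consecutive (hS.infinite_setOf_eq one_pos) hS.2.2.1 hS1
    hn fun c hc hcn => by rw [hinit c hcn]; omega
  rwa [Nat.count_zero] at hnext

lemma occurrence_lt_occurrence_one_succ (hS : DoublyFractal S) {n : ℕ}
    (hinit : ∀ k < n, S k = k + 1) (hS1 : S n = 1) (hn : 0 < n) (j : ℕ) :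
    occurrence S n j < occurrence S 1 (j + 1) := by
  induction j with
  | zero =>
    rw [occurrence_zero_of_initial hinit hn, hS.occurrence_one_one_of_initial hinit hS1 hn]
    omega
  | succ j ih =>
    rw [← hS.upperIndex_occurrence hn, ← hS.upperIndex_occurrence one_pos]
    exact Nat.nth_strictMono hS.infinite_setOf_repeat ih

end DoublyFractal

/-- In a doubly fractal sequence with initial segment (1,2,…,n,1), n ≥ 2, between
any two consecutive occurrences of n there is exactly one occurrence of 1
(indices shifted to start at 0). -/
theorem stmt16 (S : ℕ → ℕ) (hS : DoublyFractal S) (n : ℕ) (hn : 2 ≤ n)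
    (hinit : ∀ k < n, S k = k + 1) (hS1 : S n = 1)
    (a b : ℕ) (ha : S a = n) (hb : S b = n) (hab : a < b)
    (hcons : ∀ c, a < c → c < b → S c ≠ n) :
    ∃! c, a < c ∧ c < b ∧ S c = 1 := by
  classical
  have hones := hS.infinite_setOf_eq one_pos
  have hbefore := hS.occurrence_lt_occurrence_one_succ hinit hS1 (by omega : 0 < n)
  set j := Nat.count (fun i => S i = n) a
  have ha' : occurrence S n j = a := Nat.nth_count ha
  have hb' : occurrence S n (j + 1) = b :=
    Nat.nth_count_add_one_of_consecutive (hS.infinite_setOf_eq (by omega)) ha hb hab hcons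
  refine ⟨occurrence S 1 (j + 1),
    ⟨ha' ▸ hbefore j, hb' ▸ hS.occurrence_one_lt hn _, Nat.nth_mem_of_infinite hones _⟩, ?_⟩
  rintro c ⟨hac, hcb, hc⟩
  set l := Nat.count (fun i => S i = 1) c
  have hc' : occurrence S 1 l = c := Nat.nth_count hc
  have hlow : occurrence S 1 j < occurrence S 1 l :=
    calc occurrence S 1 j < occurrence S n j := hS.occurrence_one_lt hn j
      _ < _ := by rwa [ha', hc']
  have hhigh : occurrence S 1 l < occurrence S 1 (j + 2) :=
    calc _ < occurrence S n (j + 1) := by rwa [hb', hc']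
      _ < _ := hbefore (j + 1)
  rw [occurrence, Nat.nth_lt_nth hones] at hlow hhigh
  rw [← hc', show l = j + 1 by omega]
end
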